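/- arXiv:1609.03134 — 2 statements merged into one kernel-verified Lean document; each statement's English description precedes it below -/
import Mathlib

section
/- Let p be an odd prime, r ≥ 1, K = ℚ(ζ_{p^r} + ζ_{p^r}^{-1}), and P the unique prime ideal of 𝒪_K above p. Then P is the principal ideal generated by 2 − 2cos(2π/p^r) = (1 − ζ_{p^r})(1 − ζ_{p^r}^{-1}), and this generator is totally positive in K. -/
/-!
Write `y = (1 - ζ)(1 - ζ⁻¹) = 2 - (ζ + ζ⁻¹)`, an algebraic integer of `K`. Under any complex
embedding of `L` the image of `y` is `|1 - w|²` with `w ≠ 1` a root of unity, so `y` is totally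
positive; for the same reason every complex embedding sends `K` into `ℝ` while `ζ` is not real,
so `[L : K] ≥ 2`. Since `N_{L/ℚ}(ζ - 1) = N_{L/ℚ}(ζ⁻¹ - 1) = p`, we get
`N_{K/ℚ}(y) ^ [L : K] = p²`, forcing `|N_{K/ℚ}(y)| = p`; hence `(y)` is a prime of `𝓞 K` above
`p`. Finally `p` has only one prime above it in `ℚ(ζ)`, hence only one in `K`, which is `P`.
-/

open NumberField Polynomial ComplexConjugate IntermediateField Ideal

theorem Nat.eq_of_pow_eq_prime_sq {m p d : ℕ} (hp : p.Prime) (hd : 2 ≤ d) (h : m ^ d = p ^ 2) :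
    m = p := by
  have hdvd : m ∣ p := (Nat.pow_dvd_pow_iff two_ne_zero).1 (h ▸ pow_dvd_pow m hd)
  rcases hp.eq_one_or_self_of_dvd m hdvd with rfl | rfl
  · rw [one_pow, eq_comm, Nat.pow_eq_one] at h
    exact absurd (h.resolve_right two_ne_zero) hp.ne_one
  · rfl

theorem Complex.one_sub_mul_one_sub_inv_eq_normSq {w : ℂ} (hw : ‖w‖ = 1) :
    (1 - w) * (1 - w⁻¹) = Complex.normSq (1 - w) := by
  rw [Complex.normSq_eq_conj_mul_self, Complex.inv_eq_conj hw, map_sub, map_one, mul_comm]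

theorem Ideal.liesOver_span_natCast_of_mem {R : Type*} [CommRing R] {p : ℕ} [Fact p.Prime]
    {P : Ideal R} (hP : P ≠ ⊤) (h : (p : R) ∈ P) : P.LiesOver (span {(p : ℤ)}) := by
  rw [liesOver_iff]
  refine IsMaximal.eq_of_le inferInstance (fun h' ↦ hP (comap_eq_top_iff.1 h')) ?_
  rwa [span_singleton_le_iff_mem, under_def, mem_comap, algebraMap_int_eq, map_natCast]

theorem Ideal.primesOver_subsingleton_of_isScalarTower {A B C : Type*} [CommRing A] [CommRing B]
    [CommRing C] [Algebra A B] [Algebra B C] [Algebra A C] [IsScalarTower A B C]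
    [Algebra.IsIntegral B C] [FaithfulSMul B C] {p : Ideal A}
    (h : (p.primesOver C).Subsingleton) : (p.primesOver B).Subsingleton := by
  rintro P₁ ⟨_, _⟩ P₂ ⟨_, _⟩
  obtain ⟨⟨Q₁, _, _⟩⟩ := P₁.nonempty_primesOver (S := C)
  obtain ⟨⟨Q₂, _, _⟩⟩ := P₂.nonempty_primesOver (S := C)
  have hQ : Q₁ = Q₂ := h ⟨‹_›, .trans Q₁ P₁ p⟩ ⟨‹_›, .trans Q₂ P₂ p⟩
  rw [LiesOver.over (P := Q₁) (p := P₁), LiesOver.over (P := Q₂) (p := P₂), hQ]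

namespace NumberField.RingOfIntegers

theorem natAbs_norm_eq_of_norm_algebraMap_eq_sq {K L : Type*} [Field K] [NumberField K]
    [Field L] [NumberField L] [Algebra K L] {p : ℕ} (hp : p.Prime) {x : 𝓞 K}
    (hx : Algebra.norm ℚ (algebraMap K L x) = p ^ 2) (hd : 2 ≤ Module.finrank K L) :
    (Algebra.norm ℤ x).natAbs = p := by
  have hℚ : Algebra.norm ℚ (x : K) ^ Module.finrank K L = p ^ 2 := by
    rw [← hx, ← Algebra.norm_norm (S := K) (a := algebraMap K L x), Algebra.norm_algebraMap,
      map_pow]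
  have hℤ : Algebra.norm ℤ x ^ Module.finrank K L = (p : ℤ) ^ 2 := by
    exact_mod_cast (Algebra.coe_norm_int x).symm ▸ hℚ
  exact Nat.eq_of_pow_eq_prime_sq hp hd (by simpa [Int.natAbs_pow] using congrArg Int.natAbs hℤ)

theorem span_singleton_mem_primesOver_of_natAbs_norm_eq {K : Type*} [Field K] [NumberField K]
    {p : ℕ} [hp : Fact p.Prime] {x : 𝓞 K} (hx : (Algebra.norm ℤ x).natAbs = p) :
    span {x} ∈ (span {(p : ℤ)}).primesOver (𝓞 K) := by
  have habs : absNorm (span {x}) = p := by rw [absNorm_span_singleton, hx]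
  have hprime : (span {x}).IsPrime :=
    isPrime_of_irreducible_absNorm (habs ▸ hp.out.prime.irreducible)
  exact ⟨hprime, liesOver_span_natCast_of_mem hprime.ne_top (habs ▸ absNorm_mem _)⟩

end NumberField.RingOfIntegers

theorem conj_apply_eq_self_of_mem_adjoin_add_inv {L : Type*} [Field L] [CharZero L] {ζ : L}
    (τ : L →+* ℂ) (hζ : ‖τ ζ‖ = 1) {x : L} (hx : x ∈ adjoin ℚ {ζ + ζ⁻¹}) : conj (τ x) = τ x := by
  let real : IntermediateField ℚ L :=
    (((starRingEnd ℂ).comp τ).eqLocusField τ).toIntermediateField fun q ↦ by simp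
  refine (adjoin_simple_le_iff (K := real)).2 (RingHom.mem_eqLocusField.2 ?_) hx
  simp [← Complex.inv_eq_conj hζ, add_comm]

namespace IsPrimitiveRoot

variable {L : Type*} [Field L] {ζ : L} {n : ℕ}

theorem inv_ne_self (hζ : IsPrimitiveRoot ζ n) (hn : 2 < n) : ζ⁻¹ ≠ ζ := by
  intro h
  apply hζ.pow_ne_one_of_pos_of_lt two_ne_zero hn
  calc ζ ^ 2 = ζ * ζ⁻¹ := by rw [sq, h]
    _ = 1 := mul_inv_cancel₀ (hζ.ne_zero (by omega))

theorem zero_lt_of_algebraMap_eq_one_sub_mul_one_sub_inv {K : Type*} [Field K]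
    [Algebra K L] [Algebra.IsAlgebraic K L] (hζ : IsPrimitiveRoot ζ n) (hn : 1 < n) {x : K}
    (hx : algebraMap K L x = (1 - ζ) * (1 - ζ⁻¹)) (σ : K →+* ℝ) : 0 < σ x := by
  let τ := ComplexEmbedding.lift L (Complex.ofRealHom.comp σ)
  have hw : IsPrimitiveRoot (τ ζ) n := hζ.map_of_injective τ.injective
  have hσx : (σ x : ℂ) = Complex.normSq (1 - τ ζ) :=
    calc (σ x : ℂ) = τ (algebraMap K L x) :=
          (ComplexEmbedding.lift_algebraMap_apply L (Complex.ofRealHom.comp σ) x).symm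
      _ = (1 - τ ζ) * (1 - (τ ζ)⁻¹) := by rw [hx, map_mul, map_sub, map_sub, map_one, map_inv₀]
      _ = Complex.normSq (1 - τ ζ) := Complex.one_sub_mul_one_sub_inv_eq_normSq
        (Complex.norm_eq_one_of_pow_eq_one hw.pow_eq_one (by omega))
  rw [show σ x = Complex.normSq (1 - τ ζ) by exact_mod_cast hσx, Complex.normSq_pos, sub_ne_zero]
  exact (hw.ne_one hn).symm

theorem notMem_adjoin_add_inv [NumberField L] (hζ : IsPrimitiveRoot ζ n) (hn : 2 < n) :
    ζ ∉ adjoin ℚ {ζ + ζ⁻¹} := by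
  intro hmem
  let τ := ComplexEmbedding.lift L (Rat.castHom ℂ)
  have hw : IsPrimitiveRoot (τ ζ) n := hζ.map_of_injective τ.injective
  have hnorm := Complex.norm_eq_one_of_pow_eq_one hw.pow_eq_one (by omega)
  apply hw.inv_ne_self hn
  rw [Complex.inv_eq_conj hnorm]
  exact conj_apply_eq_self_of_mem_adjoin_add_inv τ hnorm hmem

theorem two_le_finrank_adjoin_add_inv [NumberField L] (hζ : IsPrimitiveRoot ζ n) (hn : 2 < n) :
    2 ≤ Module.finrank (adjoin ℚ {ζ + ζ⁻¹}) L := by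
  have hne : Module.finrank (adjoin ℚ {ζ + ζ⁻¹}) L ≠ 1 := fun h ↦
    hζ.notMem_adjoin_add_inv hn (finrank_eq_one_iff_eq_top.1 h ▸ mem_top)
  have := Module.finrank_pos (R := adjoin ℚ {ζ + ζ⁻¹}) (M := L)
  omega

theorem norm_one_sub_mul_one_sub_inv [CharZero L] {p k : ℕ} [Fact p.Prime]
    [IsCyclotomicExtension {p ^ (k + 1)} ℚ L] (hζ : IsPrimitiveRoot ζ (p ^ (k + 1)))
    (hp : p ≠ 2) : Algebra.norm ℚ ((1 - ζ) * (1 - ζ⁻¹)) = p ^ 2 := by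
  have hirr := cyclotomic.irreducible_rat (n := p ^ (k + 1)) (pow_pos (Fact.out : p.Prime).pos _)
  rw [show (1 - ζ) * (1 - ζ⁻¹) = (ζ - 1) * (ζ⁻¹ - 1) by ring, map_mul,
    hζ.norm_sub_one_of_prime_ne_two hirr hp, hζ.inv.norm_sub_one_of_prime_ne_two hirr hp, sq]

theorem exists_ringOfIntegers_adjoin_add_inv_eq [CharZero L] (hζ : IsPrimitiveRoot ζ n)
    (hn : n ≠ 0) :
    ∃ y : 𝓞 (adjoin ℚ {ζ + ζ⁻¹}), ((y : adjoin ℚ {ζ + ζ⁻¹}) : L) = (1 - ζ) * (1 - ζ⁻¹) := by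
  have hmem : (1 - ζ) * (1 - ζ⁻¹) ∈ adjoin ℚ {ζ + ζ⁻¹} := by
    rw [show (1 - ζ) * (1 - ζ⁻¹) = 2 - (ζ + ζ⁻¹) by
      linear_combination mul_inv_cancel₀ (hζ.ne_zero hn)]
    exact sub_mem (ofNat_mem _ 2) (mem_adjoin_simple_self ℚ _)
  have hint : IsIntegral ℤ ((1 - ζ) * (1 - ζ⁻¹)) :=
    (isIntegral_one.sub (hζ.isIntegral (by omega))).mul
      (isIntegral_one.sub (hζ.inv.isIntegral (by omega)))
  exact ⟨⟨⟨_, hmem⟩, (isIntegral_algebraMap_iff (x := (⟨_, hmem⟩ : adjoin ℚ {ζ + ζ⁻¹}))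
    (FaithfulSMul.algebraMap_injective _ L)).1 hint⟩, rfl⟩

end IsPrimitiveRoot

theorem stmt_6_general (p r : ℕ) (hp : p.Prime) (hpodd : Odd p) (hr : 1 ≤ r)
    (q : ℕ+) (hq : (q : ℕ) = p ^ r)
    (L : Type*) [Field L] [NumberField L] [IsCyclotomicExtension {(q : ℕ)} ℚ L]
    (ζ : L) (hζ : IsPrimitiveRoot ζ (p ^ r))
    (K : IntermediateField ℚ L) (hK : K = IntermediateField.adjoin ℚ {ζ + ζ⁻¹})
    (P : Ideal (NumberField.RingOfIntegers K)) (hP : P.IsPrime)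
    (hPp : (p : NumberField.RingOfIntegers K) ∈ P) :
    ∃ y : NumberField.RingOfIntegers K,
      ((y : K) : L) = (1 - ζ) * (1 - ζ⁻¹) ∧
      P = Ideal.span {y} ∧
      ∀ σ : K →+* ℝ, 0 < σ (y : K) := by
  obtain ⟨k, rfl⟩ : ∃ k, r = k + 1 := ⟨r - 1, by omega⟩
  have : Fact p.Prime := ⟨hp⟩
  have : IsCyclotomicExtension {p ^ (k + 1)} ℚ L := hq ▸ ‹_›
  have hp2 : p ≠ 2 := by rintro rfl; exact Nat.not_odd_iff_even.2 even_two hpodd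
  have hn : 2 < p ^ (k + 1) :=
    (hp.two_le.lt_of_ne' hp2).trans_le (Nat.le_self_pow (Nat.succ_ne_zero k) p)
  subst hK
  obtain ⟨y, hy⟩ := hζ.exists_ringOfIntegers_adjoin_add_inv_eq (by omega)
  refine ⟨y, hy, ?_, hζ.zero_lt_of_algebraMap_eq_one_sub_mul_one_sub_inv (by omega) hy⟩
  have hnorm : (Algebra.norm ℤ y).natAbs = p :=
    RingOfIntegers.natAbs_norm_eq_of_norm_algebraMap_eq_sq hp
      (by rw [← hζ.norm_one_sub_mul_one_sub_inv hp2, ← hy]; rfl)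
      (hζ.two_le_finrank_adjoin_add_inv hn)
  have hunique : ((span {(p : ℤ)}).primesOver (𝓞 L)).Subsingleton :=
    Set.ncard_le_one_iff_subsingleton.1
      (IsCyclotomicExtension.Rat.ncard_primesOver_of_prime_pow p k L).le
  exact primesOver_subsingleton_of_isScalarTower hunique
    ⟨hP, liesOver_span_natCast_of_mem hP.ne_top hPp⟩
    (RingOfIntegers.span_singleton_mem_primesOver_of_natAbs_norm_eq hnorm)

/-- With `K = ℚ(ζ_{p^r} + ζ_{p^r}⁻¹)` and `P` the unique prime of `𝓞 K` above the
odd prime `p`, `P` is generated by `2 − 2cos(2π/p^r) = (1 − ζ_{p^r})(1 − ζ_{p^r}⁻¹)`, and this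
generator is totally positive in `K`. -/
theorem stmt_6 (p r : ℕ) (hp : p.Prime) (hpodd : Odd p) (hr : 1 ≤ r)
    (q : ℕ+) (hq : (q : ℕ) = p ^ r)
    (L : Type*) [Field L] [NumberField L] [IsCyclotomicExtension {(q : ℕ)} ℚ L]
    (ζ : L) (hζ : IsPrimitiveRoot ζ (p ^ r))
    (K : IntermediateField ℚ L) (hK : K = IntermediateField.adjoin ℚ {ζ + ζ⁻¹})
    (P : Ideal (NumberField.RingOfIntegers K)) (hP : P.IsPrime) (hP0 : P ≠ ⊥)
    (hPp : (p : NumberField.RingOfIntegers K) ∈ P) :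
    ∃ y : NumberField.RingOfIntegers K,
      ((y : K) : L) = (1 - ζ) * (1 - ζ⁻¹) ∧
      P = Ideal.span {y} ∧
      ∀ σ : K →+* ℝ, 0 < σ (y : K) :=
  stmt_6_general p r hp hpodd hr q hq L ζ hζ K hK P hP hPp
end

section
/- Let p be an odd prime, r ≥ 1, and K = ℚ(ζ_{p^r} + ζ_{p^r}^{-1}). Then √p ∈ K if and only if p ≡ 1 (mod 4). -/
/-!
Let `g = ∑ₐ (a/p) ξᵃ` be the quadratic Gauss sum attached to the primitive `p`-th root of unity
`ξ = ζ^(p^(r-1))`, so that `g² = χ₄(p) p`. If `p ≡ 1 (mod 4)` the Legendre symbol is even, and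
pairing `a` with `-a` writes `2g` as a combination of the numbers `ξᵏ + ξ⁻ᵏ`, which are polynomials
in `ζ + ζ⁻¹`; hence `g ∈ K` is a square root of `p`. If `p ≡ 3 (mod 4)` then `g² = -p`, so a square
root of `p` in `K` would give `i = g / √p` in `ℚ(ζ_{p^r})`, whose roots of unity have order
dividing `2 p^r`.
-/

open ZMod

theorem pow_add_pow_mem {R S : Type*} [CommRing R] [SetLike S R] [SubringClass S R] {s : S}
    {x y : R} (hadd : x + y ∈ s) (hmul : x * y ∈ s) (n : ℕ) : x ^ n + y ^ n ∈ s := by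
  induction n using Nat.twoStepInduction with
  | zero => simpa using add_mem (one_mem s) (one_mem s)
  | one => simpa using hadd
  | more n ih ih' =>
    have recurrence : x ^ (n + 2) + y ^ (n + 2)
        = (x + y) * (x ^ (n + 1) + y ^ (n + 1)) - x * y * (x ^ n + y ^ n) := by ring
    rw [recurrence]
    exact sub_mem (mul_mem hadd ih') (mul_mem hmul ih)

theorem pow_add_inv_pow_mem_adjoin {k F : Type*} [Field k] [Field F] [Algebra k F] {ζ : F}
    (hζ : ζ ≠ 0) (n : ℕ) : ζ ^ n + (ζ ^ n)⁻¹ ∈ IntermediateField.adjoin k {ζ + ζ⁻¹} := by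
  have hadd : ζ + ζ⁻¹ ∈ IntermediateField.adjoin k {ζ + ζ⁻¹} :=
    IntermediateField.subset_adjoin k _ (Set.mem_singleton _)
  have hmul : ζ * ζ⁻¹ ∈ IntermediateField.adjoin k {ζ + ζ⁻¹} := by
    rw [mul_inv_cancel₀ hζ]; exact one_mem _
  rw [← inv_pow]
  exact pow_add_pow_mem hadd hmul n

theorem AddChar.zmodChar_add_neg_mem {F S : Type*} [Field F] [SetLike S F] [SubringClass S F]
    {s : S} {n : ℕ} [NeZero n] {ξ : F} (hξ : ξ ^ n = 1) (hs : ξ + ξ⁻¹ ∈ s) (a : ZMod n) :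
    zmodChar n hξ a + zmodChar n hξ (-a) ∈ s := by
  have hξ0 : ξ ≠ 0 := by rintro rfl; simp [NeZero.ne n] at hξ
  rw [map_neg_eq_inv, zmodChar_apply, ← inv_pow]
  exact pow_add_pow_mem hs (by simp [hξ0]) a.val

section GaussSum

theorem two_mul_gaussSum_of_map_neg_one {R R' : Type*} [CommRing R] [Fintype R] [CommRing R']
    {χ : MulChar R R'} (hχ : χ (-1) = 1) (ψ : AddChar R R') :
    2 * gaussSum χ ψ = ∑ a, χ a * (ψ a + ψ (-a)) := by
  have gaussSum_eq_sum_neg : gaussSum χ ψ = ∑ a, χ a * ψ (-a) :=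
    Fintype.sum_equiv (Equiv.neg R) _ _ fun a => by
      rw [Equiv.neg_apply, neg_neg, neg_eq_neg_one_mul a, map_mul, hχ, one_mul]
  rw [two_mul]
  nth_rw 2 [gaussSum_eq_sum_neg]
  simp only [gaussSum, mul_add, Finset.sum_add_distrib]

theorem gaussSum_mem_of_map_neg_one {R F S : Type*} [CommRing R] [Fintype R] [Field F]
    [NeZero (2 : F)] [SetLike S F] [SubfieldClass S F] {s : S} {χ : MulChar R F}
    {ψ : AddChar R F} (hχ : χ (-1) = 1) (hχs : ∀ a, χ a ∈ s) (hψs : ∀ a, ψ a + ψ (-a) ∈ s) :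
    gaussSum χ ψ ∈ s := by
  have hsum : 2 * gaussSum χ ψ ∈ s := by
    rw [two_mul_gaussSum_of_map_neg_one hχ]
    exact sum_mem fun a _ => mul_mem (hχs a) (hψs a)
  simpa [NeZero.ne (2 : F)] using mul_mem (inv_mem (ofNat_mem s 2)) hsum

variable {p : ℕ} [Fact p.Prime] {F : Type*} [CommRing F]

theorem ZMod.ringChar_ne_two (hp : p ≠ 2) : ringChar (ZMod p) ≠ 2 := by
  rwa [ZMod.ringChar_zmod_n]

theorem ZMod.quadraticChar_ringHomComp_neg_one (hp : p ≠ 2) (f : ℤ →+* F) :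
    (quadraticChar (ZMod p)).ringHomComp f (-1) = f (χ₄ p) := by
  rw [MulChar.ringHomComp_apply, quadraticChar_neg_one (ZMod.ringChar_ne_two hp), ZMod.card]

theorem ZMod.gaussSum_quadraticChar_sq [IsDomain F] [CharZero F] (hp : p ≠ 2)
    {ψ : AddChar (ZMod p) F} (hψ : ψ.IsPrimitive) :
    gaussSum ((quadraticChar (ZMod p)).ringHomComp (Int.castRingHom F)) ψ ^ 2 = χ₄ p * p := by
  have hχ : (quadraticChar (ZMod p)).ringHomComp (Int.castRingHom F) ≠ 1 :=
    (MulChar.ringHomComp_ne_one_iff (RingHom.injective_int _)).mpr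
      (quadraticChar_ne_one (ZMod.ringChar_ne_two hp))
  rw [gaussSum_sq hχ ((quadraticChar_isQuadratic _).comp _) hψ,
    quadraticChar_ringHomComp_neg_one hp, ZMod.card, eq_intCast]

end GaussSum

namespace IsCyclotomicExtension.Rat

variable {n : ℕ} [NeZero n] {K : Type*} [Field K] [NumberField K] [IsCyclotomicExtension {n} ℚ K]

theorem not_exists_sq_eq_neg_one (hn : Odd n) : ¬ ∃ i : K, i ^ 2 = -1 := by
  rintro ⟨i, hi⟩
  have : Fact (Nat.Prime 2) := ⟨Nat.prime_two⟩
  have hi4 : IsPrimitiveRoot i 4 := by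
    refine IsPrimitiveRoot.iff_orderOf.mpr (orderOf_eq_prime_pow (p := 2) (n := 1) ?_ ?_)
    · rw [pow_one, hi]; norm_num
    · rw [show 2 ^ (1 + 1) = 2 * 2 by rfl, pow_mul, hi]; norm_num
  have h4 := NumberField.Units.dvd_torsionOrder_of_isPrimitiveRoot hi4
  rw [torsionOrder_eq (n := n), if_neg (Nat.not_even_iff_odd.mpr hn)] at h4
  obtain ⟨k, rfl⟩ := hn
  omega

theorem eq_zero_of_sq_eq_of_sq_eq_neg (hn : Odd n) {a x y : K} (hx : x ^ 2 = a) (hy : y ^ 2 = -a) :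
    a = 0 := by
  by_contra ha
  have hx0 : x ≠ 0 := by rintro rfl; exact ha (by simp [← hx])
  refine not_exists_sq_eq_neg_one (K := K) hn ⟨y / x, ?_⟩
  rw [div_pow, hx, hy, neg_div, div_self ha]

end IsCyclotomicExtension.Rat

/-- For `p` an odd prime, `r ≥ 1`, and `K = ℚ(ζ_{p^r} + ζ_{p^r}⁻¹)`,
`√p ∈ K` if and only if `p ≡ 1 (mod 4)`. -/
theorem stmt_7 (p r : ℕ) (hp : p.Prime) (hpodd : Odd p) (hr : 1 ≤ r)
    (q : ℕ+) (hq : (q : ℕ) = p ^ r)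
    (L : Type*) [Field L] [NumberField L] [IsCyclotomicExtension {(q : ℕ)} ℚ L]
    (ζ : L) (hζ : IsPrimitiveRoot ζ (p ^ r))
    (K : IntermediateField ℚ L) (hK : K = IntermediateField.adjoin ℚ {ζ + ζ⁻¹}) :
    (∃ x : K, x ^ 2 = (p : K)) ↔ p % 4 = 1 := by
  have : Fact p.Prime := ⟨hp⟩
  have hp2 : p ≠ 2 := by rintro rfl; exact Nat.not_odd_iff_even.mpr even_two hpodd
  have hξ : IsPrimitiveRoot (ζ ^ p ^ (r - 1)) p :=
    hζ.pow (pow_pos hp.pos r) (by rw [← pow_succ, Nat.sub_add_cancel hr])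
  set χ := (quadraticChar (ZMod p)).ringHomComp (Int.castRingHom L)
  set g := gaussSum χ (AddChar.zmodChar p hξ.pow_eq_one)
  have hg : g ^ 2 = χ₄ p * p :=
    gaussSum_quadraticChar_sq hp2 (AddChar.zmodChar_primitive_of_primitive_root p hξ)
  constructor
  · rintro ⟨x, hx⟩
    by_contra h
    have h3 : p % 4 = 3 := by have := Nat.odd_iff.mp hpodd; omega
    have hxL : (x : L) ^ 2 = p := by exact_mod_cast congrArg Subtype.val hx
    have hgL : g ^ 2 = -p := by rw [hg, χ₄_nat_three_mod_four h3]; simp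
    exact hp.ne_zero (Nat.cast_eq_zero.mp
      (IsCyclotomicExtension.Rat.eq_zero_of_sq_eq_of_sq_eq_neg (hq ▸ hpodd.pow) hxL hgL))
  · intro h
    have hχ : χ (-1) = 1 := by simp [χ, quadraticChar_ringHomComp_neg_one hp2, χ₄_nat_one_mod_four h]
    have hξK : ζ ^ p ^ (r - 1) + (ζ ^ p ^ (r - 1))⁻¹ ∈ K :=
      hK ▸ pow_add_inv_pow_mem_adjoin (hζ.ne_zero (pow_pos hp.pos r).ne') _
    refine ⟨⟨g, gaussSum_mem_of_map_neg_one hχ (fun a => by simp [χ])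
      (AddChar.zmodChar_add_neg_mem _ hξK)⟩, Subtype.ext ?_⟩
    push_cast
    rw [hg, χ₄_nat_one_mod_four h, Int.cast_one, one_mul]
end
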